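/- arXiv:2304.06620 — 2 statements merged into one kernel-verified Lean document; each statement's English description precedes it below -/
import Mathlib

section
/- For all natural numbers m, n with m, n both odd and m + n ≡ 2 (mod 8), and with max{m,n} < 3·min{m,n} − 2: if p rows, p columns, p sum diagonals and p difference diagonals cover the m × n board, then p ≥ (m+n−2)/4 + 1. -/
/-!
Suppose `p ≤ N := (m + n - 2) / 4`. The columns `A` and rows `B` missed by the cover satisfy
`#A ≥ m - p` and `#B ≥ n - p`, and every cell of `A × B` lies on one of `σ ≤ p` sum diagonals
`x + y = s` or `δ ≤ p` difference diagonals `x - y = d`. So `∏ (x + y - s) * ∏ (x - y - d)`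
vanishes on `A × B`, and by the Combinatorial Nullstellensatz its top homogeneous part
`(x + y) ^ σ * (x - y) ^ δ` has zero coefficient at `x ^ (σ + δ - j) * y ^ j` whenever
`σ + δ - j < #A` and `j < #B`. That coefficient is the `j`-th coefficient of
`G = (1 + X) ^ σ * (1 - X) ^ δ`, and the identity `(1 - X²) G' = ((σ - δ) - (σ + δ) X) G` gives a
three-term recurrence showing that no two consecutive coefficients of `G` below degree `σ + δ`
vanish. As `#A + #B ≥ m + n - 2p ≥ σ + δ + 2`, the admissible `j` include two consecutive
indices, unless equality holds throughout: then `σ = δ = N`, `G = (1 - X²) ^ N`, and the only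
admissible index `#B - 1 = n - N - 1` is even, where `G` has coefficient `±(N choose u) ≠ 0`.
-/

open Finset

namespace MvPolynomial

variable {σ R : Type*}

theorem coeff_eq_zero_of_forall_eval_eq_zero [CommRing R] [IsDomain R] [Finite σ]
    {f : MvPolynomial σ R} (S : σ → Finset R)
    (hf : ∀ x : σ → R, (∀ i, x i ∈ S i) → eval x f = 0)
    {t : σ →₀ ℕ} (htS : ∀ i, t i < #(S i)) (hdeg : f.totalDegree ≤ t.degree) :
    f.coeff t = 0 := by
  by_contra ht
  obtain ⟨x, hx, hfx⟩ := combinatorial_nullstellensatz_exists_eval_nonzero f t ht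
    (hdeg.antisymm (le_totalDegree (mem_support_iff.mpr ht))) S htS
  exact hfx (hf x hx)

section CommSemiring

variable [CommSemiring R]

theorem homogeneousComponent_add_mul {p q : MvPolynomial σ R} {d e : ℕ}
    (hp : p.totalDegree ≤ d) (hq : q.totalDegree ≤ e) :
    homogeneousComponent (d + e) (p * q) =
      homogeneousComponent d p * homogeneousComponent e q := by
  classical
  ext t
  rw [coeff_homogeneousComponent]
  split_ifs with ht
  · rw [coeff_mul, coeff_mul]
    refine sum_congr rfl fun uv huv => ?_
    have hdeg : uv.1.degree + uv.2.degree = d + e := by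
      rw [← ht, ← (mem_antidiagonal.mp huv), map_add]
    simp only [coeff_homogeneousComponent]
    rcases lt_trichotomy uv.1.degree d with h | h | h
    · rw [coeff_eq_zero_of_totalDegree_lt (d := uv.2)
          (by rw [← Finsupp.degree_apply]; omega),
        if_neg (by omega : uv.2.degree ≠ e)]
      simp
    · rw [if_pos h, if_pos (by omega)]
    · rw [coeff_eq_zero_of_totalDegree_lt (d := uv.1)
          (by rw [← Finsupp.degree_apply]; omega), if_neg h.ne']
      simp
  · exact (((homogeneousComponent_isHomogeneous d p).mul
      (homogeneousComponent_isHomogeneous e q)).coeff_eq_zero ht).symm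

theorem homogeneousComponent_sum_prod {ι : Type*} (s : Finset ι) (p : ι → MvPolynomial σ R)
    (d : ι → ℕ) (hp : ∀ i ∈ s, (p i).totalDegree ≤ d i) :
    homogeneousComponent (∑ i ∈ s, d i) (∏ i ∈ s, p i) =
      ∏ i ∈ s, homogeneousComponent (d i) (p i) := by
  classical
  induction s using Finset.induction_on with
  | empty => simp
  | insert a s ha ih =>
    have hs : ∀ i ∈ s, (p i).totalDegree ≤ d i := fun i hi => hp i (mem_insert_of_mem hi)
    rw [sum_insert ha, prod_insert ha, prod_insert ha,
      homogeneousComponent_add_mul (hp a (mem_insert_self a s))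
        ((totalDegree_finsetProd s p).trans (sum_le_sum hs)), ih hs]

theorem coeff_aeval_one_X_of_isHomogeneous {G : MvPolynomial (Fin 2) R} {k : ℕ}
    (hG : G.IsHomogeneous k) {j : ℕ} (hj : j ≤ k) :
    (aeval ![1, Polynomial.X] G).coeff j =
      G.coeff (Finsupp.single 0 (k - j) + Finsupp.single 1 j) := by
  have hmon : ∀ (u : Fin 2 →₀ ℕ) (c : R),
      aeval ![1, Polynomial.X] (monomial u c) = Polynomial.C c * Polynomial.X ^ u 1 := by
    intro u c
    rw [aeval_monomial, Finsupp.prod_fintype _ _ (by simp), Fin.prod_univ_two]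
    simp [Polynomial.C_eq_algebraMap]
  conv_lhs => rw [G.as_sum, map_sum]
  simp only [hmon, Polynomial.finsetSum_coeff, Polynomial.coeff_C_mul_X_pow]
  rw [sum_eq_single (Finsupp.single 0 (k - j) + Finsupp.single 1 j)]
  · simp
  · intro u hu hne
    refine if_neg fun hju => hne ?_
    have hdeg : u.degree = k := by
      by_contra h
      exact mem_support_iff.mp hu (hG.coeff_eq_zero h)
    rw [Finsupp.degree_eq_sum, Fin.sum_univ_two] at hdeg
    ext i
    fin_cases i <;> simp <;> omega
  · intro h
    rw [notMem_support_iff.mp h, ite_self]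

end CommSemiring

section CommRing

variable [CommRing R]

theorem totalDegree_prod_sub_C_le {ℓ : MvPolynomial σ R} (hℓ : ℓ.IsHomogeneous 1)
    (S : Finset R) : totalDegree (∏ s ∈ S, (ℓ - C s)) ≤ #S :=
  (totalDegree_finsetProd _ _).trans <| by
    simpa using sum_le_sum fun s _ => (totalDegree_sub_C_le ℓ s).trans hℓ.totalDegree_le

theorem homogeneousComponent_prod_sub_C {ℓ : MvPolynomial σ R} (hℓ : ℓ.IsHomogeneous 1)
    (S : Finset R) : homogeneousComponent #S (∏ s ∈ S, (ℓ - C s)) = ℓ ^ #S := by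
  have hC : ∀ s : R, homogeneousComponent 1 (C s : MvPolynomial σ R) = 0 := fun s =>
    homogeneousComponent_eq_zero _ _ (by simp)
  rw [card_eq_sum_ones, homogeneousComponent_sum_prod S _ _ fun s _ =>
    (totalDegree_sub_C_le ℓ s).trans hℓ.totalDegree_le]
  simp [hC, homogeneousComponent_eq_self hℓ]

end CommRing

end MvPolynomial

namespace Polynomial

variable {R : Type*} [CommRing R]

/-- The generating function `∑ j, K_j(δ; σ + δ) X ^ j` of the Krawtchouk polynomials. -/
noncomputable def krawtchoukGenFun (σ δ : ℕ) : R[X] := (1 + X) ^ σ * (1 - X) ^ δ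

theorem coeff_zero_krawtchoukGenFun (σ δ : ℕ) :
    (krawtchoukGenFun σ δ : R[X]).coeff 0 = 1 := by
  simp [krawtchoukGenFun, coeff_zero_eq_eval_zero]

theorem coeff_krawtchoukGenFun_add (σ δ : ℕ) :
    (krawtchoukGenFun σ δ : R[X]).coeff (σ + δ) = (-1) ^ δ := by
  have h1 : ((1 + X) ^ σ : R[X]).natDegree ≤ σ := by compute_degree
  have h2 : ((1 - X) ^ δ : R[X]).natDegree ≤ δ := by compute_degree
  have h3 := coeff_pow_of_natDegree_le (m := δ)
    (show (1 - X : R[X]).natDegree ≤ 1 by compute_degree)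
  rw [mul_one] at h3
  rw [krawtchoukGenFun, coeff_mul_add_eq_of_natDegree_le h1 h2, coeff_one_add_X_pow, h3]
  simp [coeff_one]

theorem one_sub_X_sq_mul_derivative_krawtchoukGenFun (σ δ : ℕ) :
    (1 - X ^ 2) * derivative (krawtchoukGenFun σ δ : R[X]) =
      (C ((σ : R) - δ) - C ((σ : R) + δ) * X) * krawtchoukGenFun σ δ := by
  unfold krawtchoukGenFun
  cases σ <;> cases δ <;>
    simp only [derivative_mul, derivative_pow, derivative_one, derivative_X, Nat.add_sub_cancel,
      map_sub, map_add, map_natCast, map_zero, map_one, Nat.cast_add, Nat.cast_one, Nat.cast_zero,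
      pow_zero] <;> ring

theorem coeff_X_mul_derivative (p : R[X]) (n : ℕ) :
    (X * derivative p).coeff n = n * p.coeff n := by
  cases n with
  | zero => simp
  | succ n => rw [coeff_X_mul, coeff_derivative, mul_comm]; push_cast; ring

theorem coeff_krawtchoukGenFun_recurrence (σ δ j : ℕ) :
    ((j : R) + 2) * (krawtchoukGenFun σ δ).coeff (j + 2) - j * (krawtchoukGenFun σ δ).coeff j =
      ((σ : R) - δ) * (krawtchoukGenFun σ δ).coeff (j + 1) -
        ((σ : R) + δ) * (krawtchoukGenFun σ δ).coeff j := by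
  have h := congrArg (coeff · (j + 1))
    (one_sub_X_sq_mul_derivative_krawtchoukGenFun (R := R) σ δ)
  simp only [sub_mul, one_mul, coeff_sub, coeff_C_mul, mul_assoc, coeff_X_mul, pow_two,
    coeff_X_mul_derivative, coeff_derivative] at h
  push_cast at h
  linear_combination h

variable [IsDomain R] [CharZero R]

theorem coeff_krawtchoukGenFun_ne_zero_or_succ_ne_zero {σ δ j : ℕ} (hj : j < σ + δ) :
    (krawtchoukGenFun σ δ : R[X]).coeff j ≠ 0 ∨
      (krawtchoukGenFun σ δ : R[X]).coeff (j + 1) ≠ 0 := by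
  induction j with
  | zero => exact .inl (by simp [coeff_zero_krawtchoukGenFun])
  | succ j ih =>
    by_contra! h
    have hrec := coeff_krawtchoukGenFun_recurrence (R := R) σ δ j
    simp only [h.1, h.2] at hrec
    have hj' : ((σ + δ - j : ℕ) : R) ≠ 0 := Nat.cast_ne_zero.mpr (by omega)
    have hgj : (krawtchoukGenFun σ δ : R[X]).coeff j = 0 := by
      refine (mul_eq_zero.mp ?_).resolve_left hj'
      push_cast [Nat.cast_sub (by omega : j ≤ σ + δ)]
      linear_combination hrec
    rcases ih (by omega) with h' | h'
    · exact h' hgj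
    · exact h' h.1

theorem coeff_two_mul_krawtchoukGenFun_self_ne_zero {N u : ℕ} (hu : u ≤ N) :
    (krawtchoukGenFun N N : R[X]).coeff (2 * u) ≠ 0 := by
  have hexp : (krawtchoukGenFun N N : R[X]) = expand R 2 (C ((-1) ^ N) * (X + C (-1)) ^ N) := by
    simp only [krawtchoukGenFun, ← mul_pow, map_mul, map_pow, map_neg, map_one, map_add, expand_X]
    ring
  rw [hexp, coeff_expand two_pos, if_pos (dvd_mul_right 2 u), Nat.mul_div_cancel_left u two_pos,
    coeff_C_mul, coeff_X_add_C_pow]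
  exact mul_ne_zero (pow_ne_zero _ (by norm_num)) (mul_ne_zero (pow_ne_zero _ (by norm_num))
    (Nat.cast_ne_zero.mpr (Nat.choose_pos hu).ne'))

theorem exists_coeff_krawtchoukGenFun_ne_zero {σ δ a b : ℕ} (ha : 0 < a) (hb : 0 < b)
    (hab : σ + δ + 2 ≤ a + b) (htight : a + b = σ + δ + 2 → σ = δ ∧ Odd b) :
    ∃ j ≤ σ + δ, σ + δ < a + j ∧ j < b ∧
      (krawtchoukGenFun σ δ : R[X]).coeff j ≠ 0 := by
  rcases lt_or_ge (σ + δ) a with hσδa | hσδa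
  · exact ⟨0, by omega, by omega, hb, by simp [coeff_zero_krawtchoukGenFun]⟩
  rcases lt_or_ge (σ + δ) b with hσδb | hσδb
  · exact ⟨σ + δ, le_rfl, by omega, hσδb, by simp [coeff_krawtchoukGenFun_add]⟩
  rcases hab.lt_or_eq with hlt | heq
  · rcases coeff_krawtchoukGenFun_ne_zero_or_succ_ne_zero (R := R) (σ := σ) (δ := δ)
      (j := σ + δ + 1 - a) (by omega) with h | h
    · exact ⟨σ + δ + 1 - a, by omega, by omega, by omega, h⟩
    · exact ⟨σ + δ + 1 - a + 1, by omega, by omega, by omega, h⟩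
  · obtain ⟨rfl, u, rfl⟩ := htight heq.symm
    exact ⟨2 * u, by omega, by omega, by omega,
      coeff_two_mul_krawtchoukGenFun_self_ne_zero (by omega)⟩

end Polynomial

open MvPolynomial

section Diagonals

variable {R : Type*} [CommRing R]

noncomputable def diagonalPoly (S D : Finset R) : MvPolynomial (Fin 2) R :=
  (∏ s ∈ S, (X 0 + X 1 - C s)) * ∏ d ∈ D, (X 0 - X 1 - C d)

theorem isHomogeneous_X_add_X : (X 0 + X 1 : MvPolynomial (Fin 2) R).IsHomogeneous 1 :=
  (isHomogeneous_X R 0).add (isHomogeneous_X R 1)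

theorem isHomogeneous_X_sub_X : (X 0 - X 1 : MvPolynomial (Fin 2) R).IsHomogeneous 1 :=
  (isHomogeneous_X R 0).sub (isHomogeneous_X R 1)

theorem totalDegree_diagonalPoly_le (S D : Finset R) :
    (diagonalPoly S D).totalDegree ≤ #S + #D :=
  (totalDegree_mul _ _).trans <| add_le_add
    (totalDegree_prod_sub_C_le isHomogeneous_X_add_X S)
    (totalDegree_prod_sub_C_le isHomogeneous_X_sub_X D)

theorem homogeneousComponent_diagonalPoly (S D : Finset R) :
    homogeneousComponent (#S + #D) (diagonalPoly S D) = (X 0 + X 1) ^ #S * (X 0 - X 1) ^ #D := by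
  rw [diagonalPoly, homogeneousComponent_add_mul
    (totalDegree_prod_sub_C_le isHomogeneous_X_add_X S)
    (totalDegree_prod_sub_C_le isHomogeneous_X_sub_X D),
    homogeneousComponent_prod_sub_C isHomogeneous_X_add_X,
    homogeneousComponent_prod_sub_C isHomogeneous_X_sub_X]

theorem eval_diagonalPoly_eq_zero {S D : Finset R} {x : Fin 2 → R}
    (hx : x 0 + x 1 ∈ S ∨ x 0 - x 1 ∈ D) : eval x (diagonalPoly S D) = 0 := by
  rw [diagonalPoly, eval_mul, eval_prod, eval_prod]
  rcases hx with hS | hD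
  · exact mul_eq_zero_of_left (prod_eq_zero hS (by simp)) _
  · exact mul_eq_zero_of_right _ (prod_eq_zero hD (by simp))

theorem coeff_eq_zero_of_diagonal_cover [IsDomain R] {S D A B : Finset R}
    (hcover : ∀ x ∈ A, ∀ y ∈ B, x + y ∈ S ∨ x - y ∈ D) {j : ℕ} (hj : j ≤ #S + #D)
    (hA : #S + #D < #A + j) (hB : j < #B) :
    (Polynomial.krawtchoukGenFun #S #D : Polynomial R).coeff j = 0 := by
  -- the coefficient is that of `x ^ (#S + #D - j) * y ^ j` in the top homogeneous part
  have hG := homogeneousComponent_isHomogeneous (#S + #D) (diagonalPoly S D)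
  rw [homogeneousComponent_diagonalPoly] at hG
  have hdehom : aeval ![1, Polynomial.X]
      ((X 0 + X 1) ^ #S * (X 0 - X 1) ^ #D : MvPolynomial (Fin 2) R) =
      (Polynomial.krawtchoukGenFun #S #D : Polynomial R) := by
    simp [Polynomial.krawtchoukGenFun]
  have ht : (Finsupp.single (0 : Fin 2) (#S + #D - j) + Finsupp.single 1 j).degree = #S + #D := by
    rw [map_add, Finsupp.degree_single, Finsupp.degree_single]
    omega
  rw [← hdehom, coeff_aeval_one_X_of_isHomogeneous hG hj, ← homogeneousComponent_diagonalPoly,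
    coeff_homogeneousComponent, if_pos ht]
  refine coeff_eq_zero_of_forall_eval_eq_zero ![A, B] (fun x hx => ?_) ?_ ?_
  · exact eval_diagonalPoly_eq_zero (hcover _ (hx 0) _ (hx 1))
  · simp [Fin.forall_fin_two]; omega
  · exact (totalDegree_diagonalPoly_le S D).trans ht.ge

end Diagonals

theorem exists_uncovered_grid {ι : Type*} [Fintype ι] {m n : ℕ}
    (R C : ι → ℕ) (S D : ι → ℤ)
    (hcover : ∀ x y : ℕ, x < m → y < n →
      ∃ i, y = R i ∨ x = C i ∨ (x : ℤ) + y = S i ∨ (x : ℤ) - y = D i) :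
    ∃ A B : Finset ℤ, m - Fintype.card ι ≤ #A ∧ n - Fintype.card ι ≤ #B ∧
      ∀ x ∈ A, ∀ y ∈ B, x + y ∈ univ.image S ∨ x - y ∈ univ.image D := by
  classical
  have hfree : ∀ (k : ℕ) (f : ι → ℕ),
      k - Fintype.card ι ≤ #((range k \ univ.image f).image (Nat.cast : ℕ → ℤ)) := by
    intro k f
    rw [card_image_of_injective _ Nat.cast_injective]
    calc k - Fintype.card ι ≤ #(range k) - #(univ.image f) := by
          rw [card_range]; exact Nat.sub_le_sub_left card_image_le k
      _ ≤ _ := le_card_sdiff _ _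
  refine ⟨_, _, hfree m C, hfree n R, ?_⟩
  simp only [mem_image, mem_sdiff, mem_range, mem_univ, true_and, not_exists]
  rintro _ ⟨x, ⟨hx, hxC⟩, rfl⟩ _ ⟨y, ⟨hy, hyR⟩, rfl⟩
  obtain ⟨i, hi | hi | hi | hi⟩ := hcover x y hx hy
  · exact absurd hi.symm (hyR i)
  · exact absurd hi.symm (hxC i)
  · exact .inl ⟨i, hi.symm⟩
  · exact .inr ⟨i, hi.symm⟩

theorem relaxed_queens_rect_odd_improved_general (m n p : ℕ) (hn : Odd n)
    (hmod : (m + n) % 8 = 2) (hnontriv : max m n < 3 * min m n - 2)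
    (R C : Fin p → ℕ) (S D : Fin p → ℤ)
    (hcover : ∀ x y : ℕ, x < m → y < n →
      ∃ i : Fin p, y = R i ∨ x = C i ∨ (x : ℤ) + y = S i ∨ (x : ℤ) - y = D i) :
    p ≥ (m + n - 2) / 4 + 1 := by
  classical
  by_contra! hp
  obtain ⟨A, B, hA, hB, hAB⟩ := exists_uncovered_grid R C S D hcover
  rw [Fintype.card_fin] at hA hB
  have hσ : #(univ.image S) ≤ p := card_image_le.trans (by simp)
  have hδ : #(univ.image D) ≤ p := card_image_le.trans (by simp)
  have hn2 := Nat.odd_iff.mp hn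
  -- `hnontriv` gives `m, n > N ≥ p`; equality `#A + #B = σ + δ + 2` forces `σ = δ = p = N`
  -- and `#B = n - N`, which is odd because `N = (m + n - 2) / 4` is even.
  obtain ⟨j, hj, hjA, hjB, hne⟩ :=
    Polynomial.exists_coeff_krawtchoukGenFun_ne_zero (R := ℤ) (σ := #(univ.image S))
      (δ := #(univ.image D)) (a := #A) (b := #B)
      (by omega) (by omega) (by omega) fun h => ⟨by omega, Nat.odd_iff.mpr (by omega)⟩
  exact hne (coeff_eq_zero_of_diagonal_cover hAB hj hjA hjB)

/-- If `m, n` are odd, `m + n ≡ 2 [MOD 8]` and `max m n < 3 * min m n - 2`, then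
any cover of the `m × n` board by `p` rows, `p` columns, `p` sum diagonals and
`p` difference diagonals satisfies `p ≥ (m+n-2)/4 + 1`. -/
theorem relaxed_queens_rect_odd_improved (m n p : ℕ) (hm : Odd m) (hn : Odd n)
    (hmod : (m + n) % 8 = 2) (hnontriv : max m n < 3 * min m n - 2)
    (R C : Fin p → ℕ) (S D : Fin p → ℤ)
    (hcover : ∀ x y : ℕ, x < m → y < n →
      ∃ i : Fin p, y = R i ∨ x = C i ∨ (x : ℤ) + y = S i ∨ (x : ℤ) - y = D i) :
    p ≥ (m + n - 2) / 4 + 1 :=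
  relaxed_queens_rect_odd_improved_general m n p hn hmod hnontriv R C S D hcover
end

section
/- Suppose n = 4k+3 and p = 2k+1 rows, p columns, p sum diagonals and p difference diagonals cover the n × n board, with l, r the leftmost and rightmost unchosen columns and b, t the bottommost and topmost unchosen rows. Then the sum diagonal through cells (l, t) and (r, b) (i.e., with value l+t = r+b) is among the chosen sum diagonals, and of the remaining 2k chosen sum diagonals, exactly k have value greater than l+t and exactly k have value less than l+t. The analogous statement holds for the difference diagonal with value l−b = r−t. -/
/-!
Let `A` and `B` be the unchosen columns and rows; each has at least `2k + 2` elements, and every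
cell of `A × B` lies on a chosen diagonal. The cells of the left side `{l} × B` lie on pairwise
distinct sum values `≤ l + t` and pairwise distinct difference values `≤ l - b`, so at least
`2k + 2` distinct chosen diagonal values lie in these two half-lines; likewise for the other three
sides. There are at most `2k + 1` distinct sum values and as many difference values, so adding the
bounds of opposite sides forces `l + t = r + b`, then that the sum values are `2k + 1` distinct
numbers including `l + t` (likewise for differences), and finally that every side bound is an
equality, which leaves exactly `k` sum values on each side of `l + t`.
-/

open Finset

namespace Finset

variable {ι α β γ : Type*}

theorem card_le_card_add_card_of_injOn {s : Finset α} {t : Finset β} {u : Finset γ}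
    {f : α → β} {g : α → γ} (hf : Set.InjOn f s) (hg : Set.InjOn g s)
    (h : ∀ a ∈ s, f a ∈ t ∨ g a ∈ u) : #s ≤ #t + #u := by
  classical
  rw [← card_filter_add_card_filter_not (s := s) (fun a => f a ∈ t)]
  gcongr
  · exact card_le_card_of_injOn f (fun a ha => (mem_filter.1 ha).2)
      (hf.mono (filter_subset _ _))
  · refine card_le_card_of_injOn g (fun a ha => ?_) (hg.mono (filter_subset _ _))
    obtain ⟨ha, hft⟩ := mem_filter.1 ha
    exact (h a ha).resolve_left hft

theorem card_le_card_filter_forall_ne_add [Fintype ι] [DecidableEq α] (s : Finset α)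
    (f : ι → α) : #s ≤ #{x ∈ s | ∀ i, f i ≠ x} + Fintype.card ι := by
  calc #s ≤ #({x ∈ s | ∀ i, f i ≠ x} ∪ univ.image f) := card_le_card fun x hx => by
        by_cases h : ∀ i, f i ≠ x <;> simp_all
    _ ≤ #{x ∈ s | ∀ i, f i ≠ x} + #(univ.image f) := card_union_le _ _
    _ ≤ #{x ∈ s | ∀ i, f i ≠ x} + Fintype.card ι := by gcongr; exact card_image_le

theorem card_filter_univ_eq_card_filter_image [Fintype ι] [DecidableEq β] {f : ι → β}
    (hf : #(univ.image f) = Fintype.card ι) (p : β → Prop) [DecidablePred p] :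
    #{i | p (f i)} = #{b ∈ univ.image f | p b} := by
  rw [filter_image, card_image_of_injOn ((injOn_of_card_image_eq hf).mono (filter_subset _ _))]

variable [LinearOrder α] (s : Finset α)

theorem card_filter_le_add_card_filter_ge_le_of_lt {u v : α} (h : u < v) :
    #{x ∈ s | x ≤ u} + #{x ∈ s | v ≤ x} ≤ #s := by
  rw [← card_union_of_disjoint (disjoint_filter.2 fun x _ hu hv => (hu.trans_lt h).not_ge hv)]
  exact card_le_card (union_subset (filter_subset _ _) (filter_subset _ _))

theorem card_filter_le_add_card_filter_ge (v : α) :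
    #{x ∈ s | x ≤ v} + #{x ∈ s | v ≤ x} = #s + if v ∈ s then 1 else 0 := by
  rw [← card_union_add_card_inter, ← filter_or, ← filter_and]
  have hor : {x ∈ s | x ≤ v ∨ v ≤ x} = s := filter_true_of_mem fun x _ => le_total x v
  have hand : {x ∈ s | x ≤ v ∧ v ≤ x} = {x ∈ s | x = v} :=
    filter_congr fun x _ => le_antisymm_iff.symm
  rw [hor, hand, filter_eq']
  split_ifs <;> simp

end Finset

section Board

variable {ι : Type*} [Fintype ι]

def unchosen (f : ι → ℕ) (n : ℕ) : Finset ℕ := {x ∈ range n | ∀ i, f i ≠ x}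

theorem coe_unchosen (f : ι → ℕ) (n : ℕ) :
    (unchosen f n : Set ℕ) = {x | x < n ∧ ∀ i, f i ≠ x} := by
  ext x
  simp [unchosen]

theorem le_card_unchosen_add (f : ι → ℕ) (n : ℕ) : n ≤ #(unchosen f n) + Fintype.card ι :=
  (card_range n).symm.trans_le (card_le_card_filter_forall_ne_add (range n) f)

def CoversBoard (n : ℕ) (R C : ι → ℕ) (S D : ι → ℤ) : Prop :=
  ∀ x y : ℕ, x < n → y < n → ∃ i, y = R i ∨ x = C i ∨ (x : ℤ) + y = S i ∨ (x : ℤ) - y = D i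

variable {n : ℕ} {R C : ι → ℕ} {S D : ι → ℤ}

theorem CoversBoard.diag_mem (h : CoversBoard n R C S D) {x y : ℕ} (hx : x ∈ unchosen C n)
    (hy : y ∈ unchosen R n) : (x : ℤ) + y ∈ univ.image S ∨ (x : ℤ) - y ∈ univ.image D := by
  simp only [unchosen, mem_filter, mem_range] at hx hy
  obtain ⟨i, hi | hi | hi | hi⟩ := h x y hx.1 hy.1
  · exact absurd hi.symm (hy.2 i)
  · exact absurd hi.symm (hx.2 i)
  · exact .inl (mem_image.2 ⟨i, mem_univ i, hi.symm⟩)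
  · exact .inr (mem_image.2 ⟨i, mem_univ i, hi.symm⟩)

variable {P Q : ℤ → Prop} [DecidablePred P] [DecidablePred Q]

theorem CoversBoard.card_unchosen_rows_le (h : CoversBoard n R C S D) {x : ℕ}
    (hx : x ∈ unchosen C n) (hP : ∀ y ∈ unchosen R n, P (x + y))
    (hQ : ∀ y ∈ unchosen R n, Q (x - y)) :
    #(unchosen R n) ≤ #{s ∈ univ.image S | P s} + #{d ∈ univ.image D | Q d} :=
  card_le_card_add_card_of_injOn (f := fun y : ℕ => (x : ℤ) + y) (g := fun y : ℕ => (x : ℤ) - y)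
    (fun _ _ _ _ e => by simpa using e) (fun _ _ _ _ e => by simpa using e) fun y hy =>
    (h.diag_mem hx hy).imp (fun hs => mem_filter.2 ⟨hs, hP y hy⟩)
      (fun hd => mem_filter.2 ⟨hd, hQ y hy⟩)

theorem CoversBoard.card_unchosen_cols_le (h : CoversBoard n R C S D) {y : ℕ}
    (hy : y ∈ unchosen R n) (hP : ∀ x ∈ unchosen C n, P (x + y))
    (hQ : ∀ x ∈ unchosen C n, Q (x - y)) :
    #(unchosen C n) ≤ #{s ∈ univ.image S | P s} + #{d ∈ univ.image D | Q d} :=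
  card_le_card_add_card_of_injOn (f := fun x : ℕ => (x : ℤ) + y) (g := fun x : ℕ => (x : ℤ) - y)
    (fun _ _ _ _ e => by simpa using e) (fun _ _ _ _ e => by simpa using e) fun x hx =>
    (h.diag_mem hx hy).imp (fun hs => mem_filter.2 ⟨hs, hP x hx⟩)
      (fun hd => mem_filter.2 ⟨hd, hQ x hx⟩)

end Board

section SideCounts

variable {X Y : Finset ℤ}

theorem eq_of_four_side_bounds {p : ℕ} (hX : #X ≤ p) (hY : #Y ≤ p) {u₁ u₂ w₁ w₂ : ℤ}
    (h : u₁ - u₂ = w₁ - w₂)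
    (hL : p + 1 ≤ #{x ∈ X | x ≤ u₁} + #{y ∈ Y | y ≤ w₁})
    (hT : p + 1 ≤ #{x ∈ X | u₁ ≤ x} + #{y ∈ Y | y ≤ w₂})
    (hR : p + 1 ≤ #{x ∈ X | u₂ ≤ x} + #{y ∈ Y | w₂ ≤ y})
    (hB : p + 1 ≤ #{x ∈ X | x ≤ u₂} + #{y ∈ Y | w₁ ≤ y}) : u₁ = u₂ := by
  rcases lt_trichotomy u₁ u₂ with hu | hu | hu
  · have := X.card_filter_le_add_card_filter_ge_le_of_lt hu
    have := Y.card_filter_le_add_card_filter_ge_le_of_lt (show w₁ < w₂ by omega)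
    omega
  · exact hu
  · have := X.card_filter_le_add_card_filter_ge_le_of_lt hu
    have := Y.card_filter_le_add_card_filter_ge_le_of_lt (show w₂ < w₁ by omega)
    omega

theorem four_side_bounds_split {k : ℕ} (hX : #X ≤ 2 * k + 1) (hY : #Y ≤ 2 * k + 1) {u w : ℤ}
    (hL : 2 * k + 2 ≤ #{x ∈ X | x ≤ u} + #{y ∈ Y | y ≤ w})
    (hT : 2 * k + 2 ≤ #{x ∈ X | u ≤ x} + #{y ∈ Y | y ≤ w})
    (hR : 2 * k + 2 ≤ #{x ∈ X | u ≤ x} + #{y ∈ Y | w ≤ y})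
    (hB : 2 * k + 2 ≤ #{x ∈ X | x ≤ u} + #{y ∈ Y | w ≤ y}) :
    (u ∈ X ∧ #X = 2 * k + 1 ∧ #{x ∈ X | u < x} = k ∧ #{x ∈ X | x < u} = k) ∧
    (w ∈ Y ∧ #Y = 2 * k + 1 ∧ #{y ∈ Y | w < y} = k ∧ #{y ∈ Y | y < w} = k) := by
  have hXu := X.card_filter_le_add_card_filter_ge u
  have hYw := Y.card_filter_le_add_card_filter_ge w
  have hXgt := X.card_filter_add_card_filter_not (· ≤ u)
  have hXlt := X.card_filter_add_card_filter_not (u ≤ ·)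
  have hYgt := Y.card_filter_add_card_filter_not (· ≤ w)
  have hYlt := Y.card_filter_add_card_filter_not (w ≤ ·)
  simp only [not_le] at hXgt hXlt hYgt hYlt
  split_ifs at hXu hYw with hu hw
  · exact ⟨⟨hu, by omega, by omega, by omega⟩, ⟨hw, by omega, by omega, by omega⟩⟩
  all_goals omega

end SideCounts

theorem relaxed_queens_4k3_diagonal_split_general (k : ℕ)
    (R C : Fin (2 * k + 1) → ℕ) (S D : Fin (2 * k + 1) → ℤ)
    (hcover : ∀ x y : ℕ, x < 4 * k + 3 → y < 4 * k + 3 →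
      ∃ i, y = R i ∨ x = C i ∨ (x : ℤ) + y = S i ∨ (x : ℤ) - y = D i)
    (l r b t : ℕ)
    (hl : IsLeast {x : ℕ | x < 4 * k + 3 ∧ ∀ i, C i ≠ x} l)
    (hr : IsGreatest {x : ℕ | x < 4 * k + 3 ∧ ∀ i, C i ≠ x} r)
    (hb : IsLeast {y : ℕ | y < 4 * k + 3 ∧ ∀ i, R i ≠ y} b)
    (ht : IsGreatest {y : ℕ | y < 4 * k + 3 ∧ ∀ i, R i ≠ y} t) :
    ((∃ i, S i = (l : ℤ) + t) ∧
      (Finset.univ.filter (fun i => S i > (l : ℤ) + t)).card = k ∧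
      (Finset.univ.filter (fun i => S i < (l : ℤ) + t)).card = k) ∧
    ((∃ i, D i = (l : ℤ) - b) ∧
      (Finset.univ.filter (fun i => D i > (l : ℤ) - b)).card = k ∧
      (Finset.univ.filter (fun i => D i < (l : ℤ) - b)).card = k) := by
  have hcov : CoversBoard (4 * k + 3) R C S D := hcover
  rw [← coe_unchosen] at hl hr hb ht
  have hcols : 2 * k + 2 ≤ #(unchosen C (4 * k + 3)) := by
    linarith [le_card_unchosen_add C (4 * k + 3), Fintype.card_fin (2 * k + 1)]
  have hrows : 2 * k + 2 ≤ #(unchosen R (4 * k + 3)) := by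
    linarith [le_card_unchosen_add R (4 * k + 3), Fintype.card_fin (2 * k + 1)]
  have hSv : #(univ.image S) ≤ 2 * k + 1 := card_image_le.trans_eq (card_fin _)
  have hDv : #(univ.image D) ≤ 2 * k + 1 := card_image_le.trans_eq (card_fin _)
  have hleft := hrows.trans <| hcov.card_unchosen_rows_le hl.1 (P := (· ≤ (l : ℤ) + t))
    (Q := (· ≤ (l : ℤ) - b)) (fun y hy => by have := ht.2 hy; omega)
    (fun y hy => by have := hb.2 hy; omega)
  have hright := hrows.trans <| hcov.card_unchosen_rows_le hr.1 (P := ((r : ℤ) + b ≤ ·))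
    (Q := ((r : ℤ) - t ≤ ·)) (fun y hy => by have := hb.2 hy; omega)
    (fun y hy => by have := ht.2 hy; omega)
  have htop := hcols.trans <| hcov.card_unchosen_cols_le ht.1 (P := ((l : ℤ) + t ≤ ·))
    (Q := (· ≤ (r : ℤ) - t)) (fun x hx => by have := hl.2 hx; omega)
    (fun x hx => by have := hr.2 hx; omega)
  have hbottom := hcols.trans <| hcov.card_unchosen_cols_le hb.1 (P := (· ≤ (r : ℤ) + b))
    (Q := ((l : ℤ) - b ≤ ·)) (fun x hx => by have := hr.2 hx; omega)
    (fun x hx => by have := hl.2 hx; omega)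
  have hcorner : (l : ℤ) + t = r + b :=
    eq_of_four_side_bounds hSv hDv (by ring) hleft htop hright hbottom
  rw [← hcorner] at hright hbottom
  rw [show (r : ℤ) - t = l - b by omega] at htop hright
  obtain ⟨⟨hSmem, hScard, hSgt, hSlt⟩, ⟨hDmem, hDcard, hDgt, hDlt⟩⟩ :=
    four_side_bounds_split hSv hDv hleft htop hright hbottom
  have hSf := card_filter_univ_eq_card_filter_image (hScard.trans (Fintype.card_fin _).symm)
  have hDf := card_filter_univ_eq_card_filter_image (hDcard.trans (Fintype.card_fin _).symm)
  exact ⟨⟨by simpa using hSmem, (hSf _).trans hSgt, (hSf _).trans hSlt⟩,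
    ⟨by simpa using hDmem, (hDf _).trans hDgt, (hDf _).trans hDlt⟩⟩

/-- If `n = 4k+3` and `p = 2k+1` rows, columns, sum diagonals and difference
diagonals cover the `n × n` board, with `l, r` the extreme unchosen columns and
`b, t` the extreme unchosen rows, then the sum diagonal with value `l + t = r + b`
is chosen, and of the remaining `2k` chosen sum diagonals exactly `k` have larger
value and exactly `k` have smaller value; analogously for the difference diagonal
with value `l - b = r - t`. -/
theorem relaxed_queens_4k3_diagonal_split (k : ℕ)
    (R C : Fin (2 * k + 1) → ℕ) (S D : Fin (2 * k + 1) → ℤ)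
    (hR : ∀ i, R i < 4 * k + 3) (hC : ∀ i, C i < 4 * k + 3)
    (hcover : ∀ x y : ℕ, x < 4 * k + 3 → y < 4 * k + 3 →
      ∃ i, y = R i ∨ x = C i ∨ (x : ℤ) + y = S i ∨ (x : ℤ) - y = D i)
    (l r b t : ℕ)
    (hl : IsLeast {x : ℕ | x < 4 * k + 3 ∧ ∀ i, C i ≠ x} l)
    (hr : IsGreatest {x : ℕ | x < 4 * k + 3 ∧ ∀ i, C i ≠ x} r)
    (hb : IsLeast {y : ℕ | y < 4 * k + 3 ∧ ∀ i, R i ≠ y} b)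
    (ht : IsGreatest {y : ℕ | y < 4 * k + 3 ∧ ∀ i, R i ≠ y} t) :
    ((∃ i, S i = (l : ℤ) + t) ∧
      (Finset.univ.filter (fun i => S i > (l : ℤ) + t)).card = k ∧
      (Finset.univ.filter (fun i => S i < (l : ℤ) + t)).card = k) ∧
    ((∃ i, D i = (l : ℤ) - b) ∧
      (Finset.univ.filter (fun i => D i > (l : ℤ) - b)).card = k ∧
      (Finset.univ.filter (fun i => D i < (l : ℤ) - b)).card = k) :=
  relaxed_queens_4k3_diagonal_split_general k R C S D hcover l r b t hl hr hb ht
end
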